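/- Let F = ZMod 37 and A = F[t₁,…,t₈]. Let c₈ = t₁⋯t₈ be the 8th elementary symmetric polynomial in t₁,…,t₈ and p_k the k-th elementary symmetric polynomial in t₁²,…,t₈². Let D be the unique F-linear derivation of A with D(t_i) = t_i^37, and S = Algebra.adjoin F {p₁,…,p₇,c₈}. Set z̃₈ = 120p₄ + 1680c₈ + p₁²p₂ − 36p₁p₃ + 10p₂², z̃₁₂ = 60p₆ − p₁p₂p₃ − 5p₁p₅ + 5·36⁻¹·p₂³ − 5p₂p₄ + 110p₂c₈ + 3p₃², and z̃₁₄ = 480p₇ − p₂²p₃ + 40p₂p₅ − 12p₃p₄ + 312p₃c₈. Let C = F[Z₂,Z₈,Z₁₂,Z₁₄,Z₁₈,Z₂₀,Z₂₄,Z₃₀] and φ : C → A an F-algebra homomorphism such that φ(Z₂) = p₁; φ(Z₈) ≡ z̃₈ and φ(Z₁₂) ≡ z̃₁₂ modulo the ideal (p₁²); φ(Z₁₄) ≡ z̃₁₄ modulo the ideal (p₁); and for each i ∈ {8,12,14,18,20,24,30}, φ(Z_i) ∈ S is homogeneous of total degree i. Then for every h ∈ C with φ(h) = D(φ(Z₈)),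 the coefficient of the monomial Z₂₀·Z₂₄ in h is nonzero. -/

import Mathlib

open MvPolynomial

/-- The `k`-th elementary symmetric polynomial in `t₁, …, t₈` over `ZMod 37`. -/
noncomputable def cE8 (k : ℕ) : MvPolynomial (Fin 8) (ZMod 37) :=
  ∑ s ∈ Finset.powersetCard k Finset.univ, ∏ i ∈ s, X i

/-- The `k`-th elementary symmetric polynomial in `t₁², …, t₈²` over `ZMod 37`. -/
noncomputable def pE8 (k : ℕ) : MvPolynomial (Fin 8) (ZMod 37) :=
  ∑ s ∈ Finset.powersetCard k Finset.univ, ∏ i ∈ s, (X i) ^ 2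

/-- `z̃₈ = 120p₄ + 1680c₈ + p₁²p₂ − 36p₁p₃ + 10p₂²`. -/
noncomputable def zt8 : MvPolynomial (Fin 8) (ZMod 37) :=
  120 * pE8 4 + 1680 * cE8 8 + pE8 1 ^ 2 * pE8 2 - 36 * pE8 1 * pE8 3 + 10 * pE8 2 ^ 2

/-- `z̃₁₂ = 60p₆ − p₁p₂p₃ − 5p₁p₅ + 5·36⁻¹·p₂³ − 5p₂p₄ + 110p₂c₈ + 3p₃²`. -/
noncomputable def zt12 : MvPolynomial (Fin 8) (ZMod 37) :=
  60 * pE8 6 - pE8 1 * pE8 2 * pE8 3 - 5 * pE8 1 * pE8 5 +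
    C (5 * (36 : ZMod 37)⁻¹) * pE8 2 ^ 3 - 5 * pE8 2 * pE8 4 + 110 * pE8 2 * cE8 8 +
    3 * pE8 3 ^ 2

/-- `z̃₁₄ = 480p₇ − p₂²p₃ + 40p₂p₅ − 12p₃p₄ + 312p₃c₈`. -/
noncomputable def zt14 : MvPolynomial (Fin 8) (ZMod 37) :=
  480 * pE8 7 - pE8 2 ^ 2 * pE8 3 + 40 * pE8 2 * pE8 5 - 12 * pE8 3 * pE8 4 +
    312 * pE8 3 * cE8 8

/-!
Restrict everything to the line `t = u • λ` through a point `λ ∈ (𝔽₃₇²)⁸` at which `p₁`, `z̃₈`,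
`z̃₁₂`, `z̃₁₄` vanish but `D z̃₈` does not. A homogeneous polynomial of degree `n` restricts to
`(value at λ) • uⁿ`, and `D` raises degrees by `36`; since `p₁(λ) = 0` the unknown corrections
modulo `(p₁²)` and `(p₁)` are invisible. So `φ(Z₂), …, φ(Z₁₄)` restrict to `0`, `φ(Z_i)` to
`a_i uⁱ`, and `D φ(Z₈)` to `(D z̃₈)(λ) u⁴⁴ ≠ 0`, where `(D z̃₈)(λ)` is the `ε`-part of
`z̃₈(λ + ε λ³⁷)` over the dual numbers. In `φ(h) = D φ(Z₈)`, only monomials of `h` in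
`Z₁₈, Z₂₀, Z₂₄, Z₃₀` of weight `44` survive on the left, and `Z₂₀Z₂₄` is the only one.
-/

namespace MvPolynomial

section CommSemiring

variable {σ R B : Type*} [CommSemiring R] [CommSemiring B] [Algebra R B]

theorem derivation_apply_eq_sum [Fintype σ]
    (D : Derivation R (MvPolynomial σ R) (MvPolynomial σ R)) (P : MvPolynomial σ R) :
    D P = ∑ i, D (X i) * pderiv i P := by
  classical
  induction P using MvPolynomial.induction_on with
  | C a => simp
  | add p q hp hq => simp only [map_add, hp, hq, mul_add, Finset.sum_add_distrib]
  | mul_X p j hp =>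
    simp [Derivation.leibniz, hp, pderiv_X, mul_add, Finset.sum_add_distrib, Finset.mul_sum,
      Pi.single_apply, mul_left_comm (X j), mul_comm p]

theorem IsHomogeneous.derivation [Fintype σ]
    {D : Derivation R (MvPolynomial σ R) (MvPolynomial σ R)} {m n : ℕ}
    (hD : ∀ i, (D (X i)).IsHomogeneous (m + 1)) {P : MvPolynomial σ R}
    (hP : P.IsHomogeneous (n + 1)) : (D P).IsHomogeneous (n + 1 + m) := by
  rw [derivation_apply_eq_sum]
  refine IsHomogeneous.sum _ _ _ fun i _ => ?_
  convert (hD i).mul (hP.pderiv (i := i)) using 1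
  omega

theorem IsHomogeneous.aeval_mul_const {P : MvPolynomial σ R} {n : ℕ} (hP : P.IsHomogeneous n)
    (x : σ → B) (t : B) :
    MvPolynomial.aeval (fun i => x i * t) P = MvPolynomial.aeval x P * t ^ n := by
  classical
  conv_lhs => rw [P.as_sum]
  conv_rhs => rw [P.as_sum]
  rw [map_sum, map_sum, Finset.sum_mul]
  refine Finset.sum_congr rfl fun d hd => ?_
  have hdeg : d.sum (fun _ k => k) = n := by
    simpa [Finsupp.weight_apply] using hP (mem_support_iff.mp hd)
  rw [aeval_monomial, aeval_monomial, ← hdeg, Finsupp.sum, ← Finset.prod_pow_eq_pow_sum]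
  simp only [Finsupp.prod, mul_pow, Finset.prod_mul_distrib, mul_assoc]

theorem IsHomogeneous.aeval_C_mul_X {P : MvPolynomial σ R} {n : ℕ} (hP : P.IsHomogeneous n)
    (x : σ → B) :
    MvPolynomial.aeval (fun i => Polynomial.C (x i) * Polynomial.X) P =
      Polynomial.C (MvPolynomial.aeval x P) * Polynomial.X ^ n := by
  rw [hP.aeval_mul_const, ← Polynomial.CAlgHom_apply (R := R), comp_aeval_apply]
  rfl

open TrivSqZeroExt in
theorem aeval_inl_add_inr (D : Derivation R (MvPolynomial σ R) (MvPolynomial σ R)) (x : σ → B)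
    (P : MvPolynomial σ R) :
    aeval (fun i => inl (x i) + inr (aeval x (D (X i))) : σ → DualNumber B) P =
      inl (aeval x P) + inr (aeval x (D P)) := by
  induction P using MvPolynomial.induction_on with
  | C a => simp [algebraMap_eq_inl']
  | add p q hp hq =>
    simp only [map_add, hp, hq, inl_add, inr_add]
    abel
  | mul_X p i hp =>
    rw [map_mul, hp, aeval_X]
    ext <;> simp [Derivation.leibniz]
    ring

theorem coeff_aeval_C_mul_X_pow [Fintype σ] (a : σ → B) (w : σ → ℕ) (P : MvPolynomial σ R)
    (N : ℕ) :
    (aeval (fun i => Polynomial.C (a i) * Polynomial.X ^ w i) P).coeff N =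
      ∑ d ∈ P.support with ∑ i, w i * d i = N, algebraMap R B (coeff d P) * ∏ i, a i ^ d i := by
  rw [aeval_def, eval₂_eq', Polynomial.finsetSum_coeff, Finset.sum_filter]
  refine Finset.sum_congr rfl fun d _ => ?_
  simp only [mul_pow, ← pow_mul, Finset.prod_mul_distrib, Finset.prod_pow_eq_pow_sum, ← map_pow,
    ← map_prod, Polynomial.algebraMap_apply, ← mul_assoc, ← map_mul, Polynomial.coeff_C_mul_X_pow]
  split_ifs <;> simp_all [eq_comm]

end CommSemiring

section CommRing

variable {σ R B : Type*} [CommRing R] [CommSemiring B] [Algebra R B]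

theorem aeval_eq_of_sub_mem_span_singleton {x : σ → B} {q y z : MvPolynomial σ R}
    (hq : aeval x q = 0) (h : y - z ∈ Ideal.span {q}) : aeval x y = aeval x z := by
  obtain ⟨r, hr⟩ := Ideal.mem_span_singleton'.mp h
  rw [← sub_add_cancel y z, ← hr, map_add, map_mul, hq, mul_zero, zero_add]

theorem aeval_derivation_eq_of_sub_mem_span_sq
    (D : Derivation R (MvPolynomial σ R) (MvPolynomial σ R)) {x : σ → B}
    {p y z : MvPolynomial σ R} (hp : aeval x p = 0) (h : y - z ∈ Ideal.span {p ^ 2}) :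
    aeval x (D y) = aeval x (D z) := by
  obtain ⟨r, hr⟩ := Ideal.mem_span_singleton'.mp h
  rw [← sub_add_cancel y z, ← hr, map_add, map_add]
  simp [Derivation.leibniz, Derivation.leibniz_pow, hp]

end CommRing

end MvPolynomial

section E8

variable {B : Type*} [CommSemiring B] [Algebra (ZMod 37) B]

theorem aeval_pE8 (x : Fin 8 → B) (k : ℕ) :
    aeval x (pE8 k) = ∑ s ∈ Finset.powersetCard k Finset.univ, ∏ i ∈ s, x i ^ 2 := by
  simp [pE8]

theorem aeval_cE8 (x : Fin 8 → B) (k : ℕ) :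
    aeval x (cE8 k) = ∑ s ∈ Finset.powersetCard k Finset.univ, ∏ i ∈ s, x i := by
  simp [cE8]

theorem isHomogeneous_pE8 (k : ℕ) : (pE8 k).IsHomogeneous (2 * k) := by
  refine IsHomogeneous.sum _ _ _ fun s hs => ?_
  convert IsHomogeneous.prod s _ (fun _ => 2) fun i _ => isHomogeneous_X_pow i 2
  simp [(Finset.mem_powersetCard.mp hs).2, mul_comm]

def e8Degree : Fin 8 → ℕ := ![2, 8, 12, 14, 18, 20, 24, 30]

theorem eq_single_five_add_single_six_of_sum_e8Degree {d : Fin 8 →₀ ℕ}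
    (hlow : ∀ i : Fin 8, i < 4 → d i = 0) (hd : ∑ i, e8Degree i * d i = 44) :
    d = Finsupp.single 5 1 + Finsupp.single 6 1 := by
  obtain ⟨h0, h1, h2, h3⟩ : d 0 = 0 ∧ d 1 = 0 ∧ d 2 = 0 ∧ d 3 = 0 :=
    ⟨hlow 0 (by decide), hlow 1 (by decide), hlow 2 (by decide), hlow 3 (by decide)⟩
  simp only [e8Degree, Fin.sum_univ_eight, Fin.isValue, Matrix.cons_val_zero, Matrix.cons_val_one,
    Matrix.cons_val, h0, h1, h2, h3, mul_zero, add_zero, zero_add] at hd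
  ext i
  fin_cases i <;> simp <;> omega

theorem coeff_aeval_e8Degree_44 (a : Fin 8 → B) (hlow : ∀ i : Fin 8, i < 4 → a i = 0)
    (P : MvPolynomial (Fin 8) (ZMod 37)) :
    (aeval (fun i => Polynomial.C (a i) * Polynomial.X ^ e8Degree i) P).coeff 44 =
      algebraMap (ZMod 37) B (coeff (Finsupp.single 5 1 + Finsupp.single 6 1) P) *
        (a 5 * a 6) := by
  set m : Fin 8 →₀ ℕ := Finsupp.single 5 1 + Finsupp.single 6 1
  have hm : ∀ i, m i = if i = 5 ∨ i = 6 then 1 else 0 := by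
    intro i; fin_cases i <;> simp [m]
  rw [coeff_aeval_C_mul_X_pow, Finset.sum_eq_single m]
  · simp [Fin.prod_univ_eight, hm]
  · intro d hd hne
    obtain ⟨i, hi, hdi⟩ : ∃ i : Fin 8, i < 4 ∧ d i ≠ 0 := by
      by_contra! h
      exact hne (eq_single_five_add_single_six_of_sum_e8Degree h (Finset.mem_filter.mp hd).2)
    rw [Finset.prod_eq_zero (Finset.mem_univ i) (by rw [hlow i hi, zero_pow hdi]), mul_zero]
  · intro hm'
    have : coeff m P = 0 := by
      by_contra h
      exact hm' (Finset.mem_filter.mpr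
        ⟨mem_support_iff.mpr h, by simp [Fin.sum_univ_eight, hm, e8Degree]⟩)
    simp [this]

/- `QuadraticAlgebra (ZMod 37) 2 0` is `𝔽₃₇(√2) ≅ 𝔽₃₇²` (2 is not a square mod 37), in a
computable form, so that the values at `witness` below are checked by `decide`. No point of
`𝔽₃₇⁸` can serve: there `λᵢ³⁷ = λᵢ`, so `(D z̃₈)(λ) = 8 z̃₈(λ)` by Euler's identity. -/
def witness : Fin 8 → QuadraticAlgebra (ZMod 37) 2 0 :=
  ![⟨1, 0⟩, ⟨5, 13⟩, ⟨5, 24⟩, ⟨8, 10⟩, ⟨8, 27⟩, ⟨18, 0⟩, ⟨32, 3⟩, ⟨32, 34⟩]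

theorem inv_36 : (36 : ZMod 37)⁻¹ = 36 :=
  ZMod.inv_eq_of_mul_eq_one 37 36 36 rfl

set_option maxRecDepth 10000

theorem aeval_witness_pE8_one : aeval witness (pE8 1) = 0 := by
  rw [aeval_pE8]
  decide

theorem aeval_witness_zt8 : aeval witness zt8 = 0 := by
  simp only [zt8, map_add, map_sub, map_mul, map_pow, map_ofNat, aeval_pE8, aeval_cE8]
  decide

theorem aeval_witness_zt12 : aeval witness zt12 = 0 := by
  simp only [zt12, inv_36, map_add, map_sub, map_mul, map_pow, map_ofNat, aeval_pE8, aeval_cE8]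
  decide

theorem aeval_witness_zt14 : aeval witness zt14 = 0 := by
  simp only [zt14, map_add, map_sub, map_mul, map_pow, map_ofNat, aeval_pE8, aeval_cE8]
  decide

theorem aeval_witness_derivation_zt8_ne_zero
    (D : Derivation (ZMod 37) (MvPolynomial (Fin 8) (ZMod 37)) (MvPolynomial (Fin 8) (ZMod 37)))
    (hD : ∀ i, D (X i) = X i ^ 37) : aeval witness (D zt8) ≠ 0 := by
  have h := congrArg TrivSqZeroExt.snd (aeval_inl_add_inr D witness zt8)
  simp only [hD, map_pow, aeval_X, TrivSqZeroExt.snd_add, TrivSqZeroExt.snd_inl,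
    TrivSqZeroExt.snd_inr, zero_add] at h
  rw [← h]
  simp only [zt8, map_add, map_sub, map_mul, map_pow, map_ofNat, aeval_pE8, aeval_cE8]
  decide

end E8

theorem stmt16
    (D : Derivation (ZMod 37) (MvPolynomial (Fin 8) (ZMod 37)) (MvPolynomial (Fin 8) (ZMod 37)))
    (hD : ∀ i, D (X i) = X i ^ 37)
    (φ : MvPolynomial (Fin 8) (ZMod 37) →ₐ[ZMod 37] MvPolynomial (Fin 8) (ZMod 37))
    (h2 : φ (X 0) = pE8 1)
    (h8 : φ (X 1) - zt8 ∈ Ideal.span {pE8 1 ^ 2})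
    (h12 : φ (X 2) - zt12 ∈ Ideal.span {pE8 1 ^ 2})
    (h14 : φ (X 3) - zt14 ∈ Ideal.span {pE8 1})
    (hmem8 : φ (X 1) ∈ Algebra.adjoin (ZMod 37)
        {pE8 1, pE8 2, pE8 3, pE8 4, pE8 5, pE8 6, pE8 7, cE8 8} ∧
      (φ (X 1)).IsHomogeneous 8)
    (hmem12 : φ (X 2) ∈ Algebra.adjoin (ZMod 37)
        {pE8 1, pE8 2, pE8 3, pE8 4, pE8 5, pE8 6, pE8 7, cE8 8} ∧
      (φ (X 2)).IsHomogeneous 12)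
    (hmem14 : φ (X 3) ∈ Algebra.adjoin (ZMod 37)
        {pE8 1, pE8 2, pE8 3, pE8 4, pE8 5, pE8 6, pE8 7, cE8 8} ∧
      (φ (X 3)).IsHomogeneous 14)
    (hmem18 : φ (X 4) ∈ Algebra.adjoin (ZMod 37)
        {pE8 1, pE8 2, pE8 3, pE8 4, pE8 5, pE8 6, pE8 7, cE8 8} ∧
      (φ (X 4)).IsHomogeneous 18)
    (hmem20 : φ (X 5) ∈ Algebra.adjoin (ZMod 37)
        {pE8 1, pE8 2, pE8 3, pE8 4, pE8 5, pE8 6, pE8 7, cE8 8} ∧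
      (φ (X 5)).IsHomogeneous 20)
    (hmem24 : φ (X 6) ∈ Algebra.adjoin (ZMod 37)
        {pE8 1, pE8 2, pE8 3, pE8 4, pE8 5, pE8 6, pE8 7, cE8 8} ∧
      (φ (X 6)).IsHomogeneous 24)
    (hmem30 : φ (X 7) ∈ Algebra.adjoin (ZMod 37)
        {pE8 1, pE8 2, pE8 3, pE8 4, pE8 5, pE8 6, pE8 7, cE8 8} ∧
      (φ (X 7)).IsHomogeneous 30)
    (h : MvPolynomial (Fin 8) (ZMod 37)) (hh : φ h = D (φ (X 1))) :
    coeff (Finsupp.single (5 : Fin 8) 1 + Finsupp.single 6 1) h ≠ 0 := by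
  have hp₁ : aeval witness (pE8 1 ^ 2) = 0 := by simp [aeval_witness_pE8_one]
  have hlow : ∀ i : Fin 8, i < 4 → aeval witness (φ (X i)) = 0 := by
    intro i hi
    fin_cases i <;> simp only [Fin.zero_eta, Fin.mk_one, Fin.reduceFinMk, Fin.isValue, Fin.reduceLT,
      lt_self_iff_false] at hi ⊢
    · rw [h2, aeval_witness_pE8_one]
    · rw [aeval_eq_of_sub_mem_span_singleton hp₁ h8, aeval_witness_zt8]
    · rw [aeval_eq_of_sub_mem_span_singleton hp₁ h12, aeval_witness_zt12]
    · rw [aeval_eq_of_sub_mem_span_singleton aeval_witness_pE8_one h14, aeval_witness_zt14]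
  have hhom : ∀ i, (φ (X i)).IsHomogeneous (e8Degree i) := by
    intro i
    fin_cases i
    exacts [h2 ▸ isHomogeneous_pE8 1, hmem8.2, hmem12.2, hmem14.2, hmem18.2, hmem20.2, hmem24.2,
      hmem30.2]
  set ψ := aeval (R := ZMod 37) fun i => Polynomial.C (witness i) * Polynomial.X
  have hleft : ψ (φ h) = Polynomial.C (aeval witness (D zt8)) * Polynomial.X ^ 44 := by
    rw [hh, (hmem8.2.derivation (m := 36) fun i => hD i ▸ isHomogeneous_X_pow i 37).aeval_C_mul_X,
      aeval_derivation_eq_of_sub_mem_span_sq D aeval_witness_pE8_one h8]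
  have hright : ψ (φ h) =
      aeval (fun i => Polynomial.C (aeval witness (φ (X i))) * Polynomial.X ^ e8Degree i) h := by
    simp only [← fun i => (hhom i).aeval_C_mul_X witness]
    exact AlgHom.congr_fun (aeval_unique (ψ.comp φ)) h
  have hcoeff := coeff_aeval_e8Degree_44 _ hlow h
  rw [← hright, hleft, Polynomial.coeff_C_mul_X_pow, if_pos rfl] at hcoeff
  intro hzero
  rw [hzero, map_zero, zero_mul] at hcoeff
  exact aeval_witness_derivation_zt8_ne_zero D hD hcoeff
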